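/- arXiv:1403.0998 — 5 statements merged into one kernel-verified Lean document; each statement's English description precedes it below -/
import Mathlib

section
/- Let X be a real-valued random variable with CDF F, let F⁻(x) := lim_{y↑x} F(y) denote the left limit of F and J(x) := F(x) − F⁻(x) its jump at x. Let V be a random variable uniformly distributed on the interval (0,1) and independent of X, and define W := F(X) − (1 − V)·J(X). Then W is uniformly distributed on the interval (0,1). -/
/-!
Let `μ` be the law of `X` and `F = cdf μ`. Then `W = F(X⁻) + V · (F(X) - F(X⁻))` is Rüschendorf's
distributional transform of `(X, V)`, whose law is `μ ⊗ Unif(0,1)` by independence. For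
`t ∈ (0,1)` let `q` be the least `x` with `t ≤ F x`. For `v ∈ [0,1]` the transform lies between
`F(x⁻)` and `F(x)`, so it is `< t` exactly when `x < q`, or `x = q` and `v · J(q) < t - F(q⁻)`.
Hence `P(W < t) = F(q⁻) + (t - F(q⁻)) = t`, which pins down the uniform law.
-/

open MeasureTheory ProbabilityTheory Filter Set Topology Function

lemma StieltjesFunction.exists_isLeast_setOf_le (f : StieltjesFunction ℝ) {t : ℝ}
    (hbot : ∃ x, f x < t) (htop : ∃ x, t ≤ f x) : ∃ q, IsLeast {x | t ≤ f x} q := by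
  obtain ⟨x₀, hx₀⟩ := hbot
  have hbdd : BddBelow {x | t ≤ f x} :=
    ⟨x₀, fun x hx => le_of_not_gt fun hlt => (hx.trans (f.mono hlt.le)).not_gt hx₀⟩
  refine ⟨sInf {x | t ≤ f x}, ?_, fun x hx => csInf_le hbdd hx⟩
  refine ge_of_tendsto ((f.right_continuous _).mono_left (nhdsWithin_mono _ Ioi_subset_Ici_self))
    (eventually_nhdsWithin_of_forall fun x hx => ?_)
  obtain ⟨s, hs, hsx⟩ := (csInf_lt_iff hbdd htop).1 hx
  exact hs.trans (f.mono hsx.le)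

instance isProbabilityMeasure_volume_restrict_Ioo_zero_one :
    IsProbabilityMeasure (volume.restrict (Ioo (0 : ℝ) 1)) :=
  ⟨by simp⟩

lemma volume_restrict_Ioo_zero_one_Iio (a : ℝ) :
    volume.restrict (Ioo (0 : ℝ) 1) (Iio a) = ENNReal.ofReal (min a 1) := by
  rw [Measure.restrict_apply measurableSet_Iio, Iio_inter_Ioo, Real.volume_Ioo, sub_zero]

lemma ofReal_mul_volume_restrict_Ioo_zero_one_setOf_mul_lt {s d : ℝ} (hs : 0 ≤ s) (hsd : s ≤ d) :
    ENNReal.ofReal d * volume.restrict (Ioo (0 : ℝ) 1) {v | v * d < s} = ENNReal.ofReal s := by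
  rcases (hs.trans hsd).eq_or_lt with rfl | hd
  · rw [le_antisymm hsd hs, ENNReal.ofReal_zero, zero_mul]
  have hset : {v | v * d < s} = Iio (s / d) := by
    ext v
    exact (lt_div_iff₀ hd).symm
  rw [hset, volume_restrict_Ioo_zero_one_Iio, min_eq_left ((div_le_one hd).2 hsd),
    ← ENNReal.ofReal_mul hd.le, mul_div_cancel₀ _ hd.ne']

lemma eq_volume_restrict_Ioo_zero_one_of_measure_Iio (ρ : Measure ℝ) [IsProbabilityMeasure ρ]
    (h : ∀ t ∈ Ioo (0 : ℝ) 1, ρ (Iio t) = ENNReal.ofReal t) :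
    ρ = volume.restrict (Ioo 0 1) := by
  refine Measure.ext_of_Ici _ _ fun a => ?_
  rw [← compl_Iio, prob_compl_eq_one_sub measurableSet_Iio,
    prob_compl_eq_one_sub measurableSet_Iio, volume_restrict_Ioo_zero_one_Iio]
  congr 1
  rcases le_or_gt a 0 with ha0 | ha0
  · rw [ENNReal.ofReal_of_nonpos (min_le_of_left_le ha0), ← nonpos_iff_eq_zero]
    refine ge_of_tendsto (x := 𝓝[>] 0) (ENNReal.continuous_ofReal.tendsto' 0 0
      ENNReal.ofReal_zero |>.mono_left nhdsWithin_le_nhds) ?_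
    filter_upwards [Ioo_mem_nhdsGT zero_lt_one] with s hs
    exact (measure_mono (Iio_subset_Iio (ha0.trans hs.1.le))).trans_eq (h s hs)
  rcases lt_or_ge a 1 with ha1 | ha1
  · rw [min_eq_left ha1.le, h a ⟨ha0, ha1⟩]
  rw [min_eq_right ha1, ENNReal.ofReal_one]
  refine le_antisymm prob_le_one (le_of_tendsto (x := 𝓝[<] 1)
    (ENNReal.continuous_ofReal.tendsto' 1 1 ENNReal.ofReal_one |>.mono_left nhdsWithin_le_nhds) ?_)
  filter_upwards [Ioo_mem_nhdsLT zero_lt_one] with s hs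
  exact (h s hs).symm.trans_le (measure_mono (Iio_subset_Iio (hs.2.le.trans ha1)))

noncomputable def distributionalTransform (μ : Measure ℝ) (p : ℝ × ℝ) : ℝ :=
  leftLim (cdf μ) p.1 + p.2 * (cdf μ p.1 - leftLim (cdf μ) p.1)

section DistributionalTransform

variable (μ : Measure ℝ)

lemma measurable_distributionalTransform : Measurable (distributionalTransform μ) := by
  have hF : Measurable fun p : ℝ × ℝ => cdf μ p.1 :=
    (monotone_cdf μ).measurable.comp measurable_fst
  have hL : Measurable fun p : ℝ × ℝ => leftLim (cdf μ) p.1 :=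
    (monotone_cdf μ).leftLim.measurable.comp measurable_fst
  exact hL.add (measurable_snd.mul (hF.sub hL))

lemma leftLim_cdf_le_distributionalTransform {x v : ℝ} (hv : 0 ≤ v) :
    leftLim (cdf μ) x ≤ distributionalTransform μ (x, v) :=
  le_add_of_nonneg_right (mul_nonneg hv (sub_nonneg.2 ((monotone_cdf μ).leftLim_le le_rfl)))

lemma distributionalTransform_le_cdf {x v : ℝ} (hv : v ≤ 1) :
    distributionalTransform μ (x, v) ≤ cdf μ x := by
  have := mul_le_of_le_one_left (sub_nonneg.2 ((monotone_cdf μ).leftLim_le (le_refl x))) hv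
  simp only [distributionalTransform]
  linarith

lemma distributionalTransform_lt_iff {t q : ℝ} (hq : IsLeast {x | t ≤ cdf μ x} q) {x v : ℝ}
    (hv : v ∈ Icc (0 : ℝ) 1) :
    distributionalTransform μ (x, v) < t ↔
      x < q ∨ x = q ∧ distributionalTransform μ (q, v) < t := by
  rcases lt_trichotomy x q with hxq | rfl | hqx
  · simp only [hxq, true_or, iff_true]
    exact (distributionalTransform_le_cdf μ hv.2).trans_lt
      (lt_of_not_ge fun h => (hq.2 h).not_gt hxq)
  · simp
  · simp only [hqx.not_gt, hqx.ne', false_or, false_and, iff_false, not_lt]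
    exact hq.1.trans (((monotone_cdf μ).le_leftLim hqx).trans
      (leftLim_cdf_le_distributionalTransform μ hv.1))

variable [IsProbabilityMeasure μ]

lemma prod_preimage_distributionalTransform_Iio {t : ℝ} (ht : t ∈ Ioo (0 : ℝ) 1) :
    μ.prod (volume.restrict (Ioo 0 1)) (distributionalTransform μ ⁻¹' Iio t) =
      ENNReal.ofReal t := by
  set ν := volume.restrict (Ioo (0 : ℝ) 1)
  obtain ⟨q, hq⟩ := (cdf μ).exists_isLeast_setOf_le
    ((tendsto_cdf_atBot μ).eventually (eventually_lt_nhds ht.1)).exists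
    ((tendsto_cdf_atTop μ).eventually (eventually_ge_nhds ht.2)).exists
  set a := leftLim (cdf μ) q
  set b := cdf μ q
  have hat : a ≤ t := le_of_tendsto ((monotone_cdf μ).tendsto_leftLim q)
    (eventually_nhdsWithin_of_forall fun x hx => le_of_not_ge fun h => (hq.2 h).not_gt hx)
  have hab : a ≤ b := (monotone_cdf μ).leftLim_le le_rfl
  have ha : 0 ≤ a := (cdf_nonneg μ _).trans ((monotone_cdf μ).le_leftLim (sub_one_lt q))
  have hIio : μ (Iio q) = ENNReal.ofReal a := by
    simpa [measure_cdf] using (cdf μ).measure_Iio (tendsto_cdf_atBot μ) q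
  have hsingleton : μ {q} = ENNReal.ofReal (b - a) := by
    simpa [measure_cdf] using (cdf μ).measure_singleton q
  have hsnd : ∀ᵐ p ∂μ.prod ν, p.2 ∈ Icc (0 : ℝ) 1 :=
    Measure.quasiMeasurePreserving_snd.ae
      (ae_restrict_of_forall_mem measurableSet_Ioo fun _ hv => Ioo_subset_Icc_self hv)
  have hslice : {v | distributionalTransform μ (q, v) < t} = {v | v * (b - a) < t - a} := by
    ext v
    simp only [distributionalTransform, mem_ofPred_eq]
    constructor <;> intro h <;> linarith
  calc μ.prod ν (distributionalTransform μ ⁻¹' Iio t)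
      = μ.prod ν (Iio q ×ˢ univ ∪ {q} ×ˢ {v | distributionalTransform μ (q, v) < t}) :=
        measure_congr <| eventuallyEq_set.2 <| hsnd.mono fun ⟨x, v⟩ hv => by
          simpa using distributionalTransform_lt_iff μ hq (x := x) hv
    _ = ENNReal.ofReal a + ENNReal.ofReal (b - a) * ν {v | v * (b - a) < t - a} := by
        rw [measure_union, Measure.prod_prod, Measure.prod_prod, measure_univ, mul_one, hIio,
          hsingleton, hslice]
        · exact disjoint_prod.2 (.inl (disjoint_singleton_right.2 (lt_irrefl q)))
        · exact (measurableSet_singleton q).prod (measurableSet_lt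
            ((measurable_distributionalTransform μ).comp measurable_prodMk_left) measurable_const)
    _ = ENNReal.ofReal t := by
        rw [ofReal_mul_volume_restrict_Ioo_zero_one_setOf_mul_lt (sub_nonneg.2 hat)
          (sub_le_sub_right hq.1 a), ← ENNReal.ofReal_add ha (sub_nonneg.2 hat),
          add_sub_cancel]

theorem map_distributionalTransform_prod :
    (μ.prod (volume.restrict (Ioo 0 1))).map (distributionalTransform μ) =
      volume.restrict (Ioo 0 1) := by
  have := Measure.isProbabilityMeasure_map (μ := μ.prod (volume.restrict (Ioo (0 : ℝ) 1)))
    (measurable_distributionalTransform μ).aemeasurable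
  refine eq_volume_restrict_Ioo_zero_one_of_measure_Iio _ fun t ht => ?_
  rw [Measure.map_apply (measurable_distributionalTransform μ) measurableSet_Iio]
  exact prod_preimage_distributionalTransform_Iio μ ht

end DistributionalTransform

/-- **General probability integral transform, single-variable case.**
Let `X` be a real random variable with CDF `F`, `Fm` the left-limit function of `F`,
and `J := F - Fm` its jump function.  If `V` is uniform on `(0,1)` and independent of `X`,
then `W := F(X) - (1 - V) * J(X)` is uniformly distributed on `(0,1)`. -/
theorem uniform_of_generalized_PIT
    {Ω : Type*} [MeasurableSpace Ω] (P : Measure Ω) [IsProbabilityMeasure P]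
    (X V : Ω → ℝ) (hX : Measurable X) (hV : Measurable V)
    (hVunif : Measure.map V P = volume.restrict (Set.Ioo (0 : ℝ) 1))
    (hindep : IndepFun X V P)
    (F Fm J : ℝ → ℝ)
    (hF : ∀ x, F x = (P (X ⁻¹' Set.Iic x)).toReal)
    (hFm : ∀ x, Tendsto F (nhdsWithin x (Set.Iio x)) (nhds (Fm x)))
    (hJ : ∀ x, J x = F x - Fm x)
    (W : Ω → ℝ) (hW : ∀ ω, W ω = F (X ω) - (1 - V ω) * J (X ω)) :
    Measure.map W P = volume.restrict (Set.Ioo (0 : ℝ) 1) := by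
  set μ := P.map X
  have : IsProbabilityMeasure μ := Measure.isProbabilityMeasure_map hX.aemeasurable
  have hF_cdf : F = cdf μ := funext fun x => by
    rw [hF, cdf_eq_real, measureReal_def, Measure.map_apply hX measurableSet_Iic]
  have hFm_leftLim : Fm = leftLim (cdf μ) := funext fun x =>
    tendsto_nhds_unique (hF_cdf ▸ hFm x) ((monotone_cdf μ).tendsto_leftLim x)
  have hW_transform : W = distributionalTransform μ ∘ fun ω => (X ω, V ω) := funext fun ω => by
    simp only [hW, hJ, hF_cdf, hFm_leftLim, Function.comp_apply, distributionalTransform]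
    ring
  rw [hW_transform, ← Measure.map_map (measurable_distributionalTransform μ) (hX.prodMk hV),
    hindep.map_prod_eq_prod_map_map hX.aemeasurable hV.aemeasurable, hVunif]
  exact map_distributionalTransform_prod μ
end

section
/- Let X be a real-valued random variable with CDF F, let F⁻ and J be the left-limit and jump functions of F, let V be uniformly distributed on (0,1) and independent of X, and define W := F(X) − (1 − V)·J(X). For 0 < p < 1 define the generalized quantile Q(p) := inf{x : F(x) ≥ p}. Then almost surely, W ≤ p if and only if either X < Q(p), or X = Q(p) and V·J(Q(p)) ≤ p − F⁻(Q(p)). -/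
open MeasureTheory ProbabilityTheory Filter Set Function

/-!
Write `W = F⁻(X) + V J(X)`, so that `F⁻(X) ≤ W ≤ F(X)` once `0 < V < 1`, and let `q = Q p`.
By right-continuity of `F`, `F⁻(q) ≤ p ≤ F(q)`. For `X < q` this yields `W ≤ F(X) ≤ F⁻(q) ≤ p`,
for `X = q` the claim is a rearrangement, and for `X > q` we get `W ≥ F⁻(X) ≥ F(q) ≥ p`, with
equality only if `J(X) = 0` and `F(X) = F(q)`. The last event is null: for the law `μ` of `X`,
the set of `x > q` with `μ (q, x] = 0` is covered by countably many such null intervals.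
-/

theorem measure_setOf_measure_Ioc_eq_zero {α : Type*} [LinearOrder α] [TopologicalSpace α]
    [OrderTopology α] [SecondCountableTopology α] [MeasurableSpace α] (μ : Measure α) (a : α) :
    μ {x | a < x ∧ μ (Ioc a x) = 0} = 0 := by
  set T := {x | a < x ∧ μ (Ioc a x) = 0}
  refine measure_null_of_locally_null T fun x hx => ?_
  by_cases hmax : ∃ y ∈ T, x < y
  · obtain ⟨y, hyT, hxy⟩ := hmax
    exact ⟨Ioc a y, mem_nhdsWithin_of_mem_nhds (Ioc_mem_nhds hx.1 hxy), hyT.2⟩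
  · push Not at hmax
    exact ⟨Ioc a x, mem_of_superset self_mem_nhdsWithin fun z hz => ⟨hz.1, hmax z hz⟩, hx.2⟩

theorem StieltjesFunction.le_apply_csInf (f : StieltjesFunction ℝ) {p : ℝ}
    (hne : {x | p ≤ f x}.Nonempty) (hbdd : BddBelow {x | p ≤ f x}) :
    p ≤ f (sInf {x | p ≤ f x}) := by
  have hgt : ∀ x ∈ Ioi (sInf {x | p ≤ f x}), p ≤ f x := fun x hx => by
    obtain ⟨z, hz, hzx⟩ := (csInf_lt_iff hbdd hne).mp hx
    exact hz.trans (f.mono hzx.le)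
  exact ge_of_tendsto ((f.right_continuous _).mono Ioi_subset_Ici_self).tendsto
    (eventually_nhdsWithin_of_forall hgt)

theorem Monotone.leftLim_csInf_le {f : ℝ → ℝ} (hf : Monotone f) {p : ℝ}
    (hbdd : BddBelow {x | p ≤ f x}) : leftLim f (sInf {x | p ≤ f x}) ≤ p :=
  _root_.le_of_tendsto (hf.tendsto_leftLim _) <| eventually_nhdsWithin_of_forall fun _ hy =>
    le_of_not_ge (notMem_of_lt_csInf (s := {x | p ≤ f x}) hy hbdd)

namespace ProbabilityTheory

variable (μ : Measure ℝ)

theorem nonempty_setOf_le_cdf {p : ℝ} (hp : p < 1) : {x | p ≤ cdf μ x}.Nonempty :=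
  let ⟨x, hx⟩ := ((tendsto_cdf_atTop μ).eventually (eventually_gt_nhds hp)).exists
  ⟨x, hx.le⟩

theorem bddBelow_setOf_le_cdf {p : ℝ} (hp : 0 < p) : BddBelow {x | p ≤ cdf μ x} := by
  obtain ⟨b, hb⟩ := ((tendsto_cdf_atBot μ).eventually (eventually_lt_nhds hp)).exists
  exact ⟨b, fun z hz => le_of_not_gt fun hzb => (((cdf μ).mono hzb.le).trans_lt hb).not_ge hz⟩

theorem measure_setOf_cdf_le_cdf [IsProbabilityMeasure μ] (q : ℝ) :
    μ {x | q < x ∧ cdf μ x ≤ cdf μ q} = 0 := by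
  refine measure_mono_null ?_ (measure_setOf_measure_Ioc_eq_zero μ q)
  rintro x ⟨hqx, hle⟩
  refine ⟨hqx, ?_⟩
  rw [← measure_cdf μ, StieltjesFunction.measure_Ioc, ENNReal.ofReal_eq_zero]
  linarith

end ProbabilityTheory

noncomputable def randomizedPIT (f : ℝ → ℝ) (v x : ℝ) : ℝ :=
  f x - (1 - v) * (f x - leftLim f x)

theorem leftLim_le_randomizedPIT {f : ℝ → ℝ} (hf : Monotone f) {v : ℝ} (hv : 0 ≤ v) (x : ℝ) :
    leftLim f x ≤ randomizedPIT f v x := by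
  have := hf.leftLim_le (le_refl x)
  unfold randomizedPIT
  nlinarith

theorem randomizedPIT_le {f : ℝ → ℝ} (hf : Monotone f) {v : ℝ} (hv : v ≤ 1) (x : ℝ) :
    randomizedPIT f v x ≤ f x := by
  have := hf.leftLim_le (le_refl x)
  unfold randomizedPIT
  nlinarith

theorem randomizedPIT_le_iff {f : ℝ → ℝ} (hf : Monotone f) {v p q x : ℝ} (hv0 : 0 < v)
    (hv1 : v ≤ 1) (hpq : p ≤ f q) (hqp : leftLim f q ≤ p) (hx : ¬(q < x ∧ f x ≤ f q)) :
    randomizedPIT f v x ≤ p ↔ x < q ∨ x = q ∧ v * (f q - leftLim f q) ≤ p - leftLim f q := by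
  rcases lt_trichotomy x q with hlt | rfl | hgt
  · simp only [hlt, true_or, iff_true]
    exact ((randomizedPIT_le hf hv1 x).trans (hf.le_leftLim hlt)).trans hqp
  · simp only [lt_irrefl, true_and, false_or, randomizedPIT]
    constructor <;> intro h <;> linarith
  · have hlower := leftLim_le_randomizedPIT hf hv0.le x
    simp only [hgt.not_gt, hgt.ne', false_and, or_self, iff_false, not_le]
    refine lt_of_le_of_ne ((hpq.trans (hf.le_leftLim hgt)).trans hlower) fun hW => hx ⟨hgt, ?_⟩
    have hjump : v * (f x - leftLim f x) ≤ 0 := by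
      have := hf.le_leftLim hgt
      unfold randomizedPIT at hW
      linarith
    linarith [nonpos_of_mul_nonpos_right hjump hv0]

theorem generalized_PIT_event_characterization_general
    {Ω : Type*} [MeasurableSpace Ω] (P : Measure Ω) [IsProbabilityMeasure P]
    (X V : Ω → ℝ) (hX : Measurable X) (hV : Measurable V)
    (hVunif : Measure.map V P = volume.restrict (Set.Ioo (0 : ℝ) 1))
    (F Fm J : ℝ → ℝ)
    (hF : ∀ x, F x = (P (X ⁻¹' Set.Iic x)).toReal)
    (hFm : ∀ x, Tendsto F (nhdsWithin x (Set.Iio x)) (nhds (Fm x)))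
    (hJ : ∀ x, J x = F x - Fm x)
    (W : Ω → ℝ) (hW : ∀ ω, W ω = F (X ω) - (1 - V ω) * J (X ω))
    (Q : ℝ → ℝ) (hQ : ∀ p, Q p = sInf {x : ℝ | p ≤ F x}) :
    ∀ p : ℝ, 0 < p → p < 1 →
      ∀ᵐ ω ∂P, (W ω ≤ p ↔
        X ω < Q p ∨ (X ω = Q p ∧ V ω * J (Q p) ≤ p - Fm (Q p))) := by
  intro p hp0 hp1
  set μ := P.map X
  have : IsProbabilityMeasure μ := Measure.isProbabilityMeasure_map hX.aemeasurable
  obtain rfl : F = cdf μ := funext fun x => by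
    rw [hF, cdf_eq_real, measureReal_def, Measure.map_apply hX measurableSet_Iic]
  obtain rfl : Fm = leftLim (cdf μ) :=
    funext fun x => tendsto_nhds_unique (hFm x) ((cdf μ).mono.tendsto_leftLim x)
  have hflat : ∀ᵐ ω ∂P, ¬(Q p < X ω ∧ cdf μ (X ω) ≤ cdf μ (Q p)) :=
    ae_of_ae_map hX.aemeasurable
      (measure_eq_zero_iff_ae_notMem.1 (measure_setOf_cdf_le_cdf μ (Q p)))
  have hVmem : ∀ᵐ ω ∂P, V ω ∈ Ioo (0 : ℝ) 1 :=
    ae_of_ae_map hV.aemeasurable (hVunif ▸ ae_restrict_mem measurableSet_Ioo)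
  have hbdd := bddBelow_setOf_le_cdf μ hp0
  filter_upwards [hflat, hVmem] with ω hω hVω
  rw [hW, hJ, hJ, hQ]
  change randomizedPIT (cdf μ) (V ω) (X ω) ≤ p ↔ _
  exact randomizedPIT_le_iff (cdf μ).mono hVω.1 hVω.2.le
    ((cdf μ).le_apply_csInf (nonempty_setOf_le_cdf μ hp1) hbdd)
    ((cdf μ).mono.leftLim_csInf_le hbdd) (hQ p ▸ hω)

/-- Characterization of the event `{W ≤ p}` for the generalized probability integral
transform `W := F(X) - (1 - V) * J(X)`, in terms of the generalized quantile
`Q p := inf {x | F x ≥ p}`:  almost surely, `W ≤ p` iff either `X < Q p`, or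
`X = Q p` and `V * J (Q p) ≤ p - Fm (Q p)`. -/
theorem generalized_PIT_event_characterization
    {Ω : Type*} [MeasurableSpace Ω] (P : Measure Ω) [IsProbabilityMeasure P]
    (X V : Ω → ℝ) (hX : Measurable X) (hV : Measurable V)
    (hVunif : Measure.map V P = volume.restrict (Set.Ioo (0 : ℝ) 1))
    (hindep : IndepFun X V P)
    (F Fm J : ℝ → ℝ)
    (hF : ∀ x, F x = (P (X ⁻¹' Set.Iic x)).toReal)
    (hFm : ∀ x, Tendsto F (nhdsWithin x (Set.Iio x)) (nhds (Fm x)))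
    (hJ : ∀ x, J x = F x - Fm x)
    (W : Ω → ℝ) (hW : ∀ ω, W ω = F (X ω) - (1 - V ω) * J (X ω))
    (Q : ℝ → ℝ) (hQ : ∀ p, Q p = sInf {x : ℝ | p ≤ F x}) :
    ∀ p : ℝ, 0 < p → p < 1 →
      ∀ᵐ ω ∂P, (W ω ≤ p ↔
        X ω < Q p ∨ (X ω = Q p ∧ V ω * J (Q p) ≤ p - Fm (Q p))) :=
  generalized_PIT_event_characterization_general P X V hX hV hVunif F Fm J hF hFm hJ W hW Q hQ
end

section
/- Let (Ω, ℱ, P) be a probability space, 𝒢 ⊆ ℱ a sub-σ-algebra, and X a real-valued random variable. Let κ be a regular conditional distribution of X given 𝒢, and for ω ∈ Ω set F(x|ω) := κ(ω)((−∞, x]), with F⁻(x|ω) its left limit in x and J(x|ω) := F(x|ω) − F⁻(x|ω). Let V be uniformly distributed on (0,1) and independent of the σ-algebra generated by 𝒢 and X, and define W(ω) := F(X(ω)|ω) − (1 − V(ω))·J(X(ω)|ω). Then W is uniformly distributed on (0,1) and W is independent of 𝒢. -/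
/-!
Conditionally on `𝒢`, `X` has law `κ ω` and `V` is an independent uniform variable, so everything
reduces to the randomized probability integral transform for one law `μ` on `ℝ` with CDF `F`.
For `t ∈ (0, 1)` choose `q` with `F(q⁻) ≤ t ≤ F(q)`. The event `F(X⁻) + V (F(X) - F(X⁻)) ≤ t`
then holds surely on `X < q`, almost never on `X > q` (`F` increases strictly to the right of
`q` at `μ`-almost every point), and with probability `(t - F(q⁻)) / (F(q) - F(q⁻))` on `X = q`;
the three contributions add up to `t`. Since the resulting conditional law of `W` is uniform
whatever `ω` is, `W` is uniform and independent of `𝒢`.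
-/

open MeasureTheory ProbabilityTheory Filter Set Function
open scoped ENNReal

local notation "𝒰" => volume.restrict (Ioo (0 : ℝ) 1)

lemma measure_eq_zero_of_forall_measure_inter_Iic_eq_zero {μ : Measure ℝ} {S : Set ℝ}
    (h : ∀ x ∈ S, μ (S ∩ Iic x) = 0) : μ S = 0 := by
  refine measure_null_of_locally_null S fun x hx => ?_
  by_cases hmax : ∃ y ∈ S, x < y
  · obtain ⟨y, hy, hxy⟩ := hmax
    exact ⟨S ∩ Iic y, mem_of_superset (inter_mem_nhdsWithin S (Iio_mem_nhds hxy))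
      (inter_subset_inter_right _ Iio_subset_Iic_self), h y hy⟩
  · push Not at hmax
    exact ⟨S ∩ Iic x, mem_of_superset self_mem_nhdsWithin fun y hy => ⟨hy, hmax y hy⟩, h x hx⟩

lemma lintegral_eq_setLIntegral_Iio_add_singleton_add_Ioi (μ : Measure ℝ) (f : ℝ → ℝ≥0∞)
    (q : ℝ) : ∫⁻ x, f x ∂μ = ∫⁻ x in Iio q, f x ∂μ + f q * μ {q} + ∫⁻ x in Ioi q, f x ∂μ := by
  rw [← lintegral_singleton, ← setLIntegral_univ, ← Iic_union_Ioi (a := q),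
    lintegral_union measurableSet_Ioi (Iic_disjoint_Ioi le_rfl), ← Iio_union_right,
    lintegral_union (measurableSet_singleton q) (by simp)]

lemma uniform_Iic (t : ℝ) : 𝒰 (Iic t) = ENNReal.ofReal (min t 1) := by
  rw [Measure.restrict_apply measurableSet_Iic]
  refine le_antisymm ?_ ?_
  · calc volume (Iic t ∩ Ioo 0 1) ≤ volume (Ioc 0 (min t 1)) :=
          measure_mono fun v hv => ⟨hv.2.1, le_min hv.1 hv.2.2.le⟩
      _ = ENNReal.ofReal (min t 1) := by rw [Real.volume_Ioc, sub_zero]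
  · calc ENNReal.ofReal (min t 1) = volume (Ioo 0 (min t 1)) := by
          rw [Real.volume_Ioo, sub_zero]
      _ ≤ volume (Iic t ∩ Ioo 0 1) := measure_mono fun v hv =>
          ⟨(hv.2.trans_le (min_le_left _ _)).le, hv.1, hv.2.trans_le (min_le_right _ _)⟩

lemma uniform_eq_one {S : Set ℝ} (h : Ioo (0 : ℝ) 1 ⊆ S) : 𝒰 S = 1 := by
  rw [Measure.restrict_apply' measurableSet_Ioo, inter_eq_right.mpr h, Real.volume_Ioo]
  norm_num

lemma exists_mem_Ioo_of_uniform_ne_zero {S : Set ℝ} (h : 𝒰 S ≠ 0) :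
    ∃ v ∈ Ioo (0 : ℝ) 1, v ∈ S := by
  rw [Measure.restrict_apply' measurableSet_Ioo] at h
  obtain ⟨v, hvS, hv⟩ := nonempty_of_measure_ne_zero h
  exact ⟨v, hv, hvS⟩

lemma setLIntegral_eq_measure_inter_of_toReal_ae_eq_condExp {Ω : Type*}
    {m mΩ : MeasurableSpace Ω} (hm : m ≤ mΩ) {P : Measure Ω} [IsFiniteMeasure P] {s A : Set Ω}
    (hs : MeasurableSet s) (hA : MeasurableSet[m] A) {f : Ω → ℝ≥0∞} (hf : ∀ᵐ ω ∂P, f ω ≠ ∞)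
    (hf_condExp : (fun ω => (f ω).toReal) =ᵐ[P] P[s.indicator fun _ => (1 : ℝ) | m]) :
    ∫⁻ ω in A, f ω ∂P = P (A ∩ s) := by
  have hint : Integrable (s.indicator fun _ => (1 : ℝ)) P := (integrable_const _).indicator hs
  calc ∫⁻ ω in A, f ω ∂P
        = ∫⁻ ω in A, ENNReal.ofReal (P[s.indicator fun _ => (1 : ℝ) | m] ω) ∂P :=
        lintegral_congr_ae <| ae_restrict_of_ae <| by
          filter_upwards [hf, hf_condExp] with ω hω hω'
          rw [← hω', ENNReal.ofReal_toReal hω]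
    _ = ENNReal.ofReal (∫ ω in A, P[s.indicator fun _ => (1 : ℝ) | m] ω ∂P) :=
        (ofReal_integral_eq_lintegral_ofReal integrable_condExp.restrict <|
          ae_restrict_of_ae <| by
            filter_upwards [hf_condExp] with ω hω
            rw [Pi.zero_apply, ← hω]
            exact ENNReal.toReal_nonneg).symm
    _ = P (A ∩ s) := by
        rw [setIntegral_condExp hm hint hA, setIntegral_indicator hs, setIntegral_const,
          smul_eq_mul, mul_one, ofReal_measureReal]

namespace ProbabilityTheory

section CDF

variable (μ : Measure ℝ)

lemma leftLim_cdf_le_cdf (x : ℝ) : leftLim (cdf μ) x ≤ cdf μ x :=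
  (monotone_cdf μ).leftLim_le le_rfl

lemma leftLim_cdf_nonneg (x : ℝ) : 0 ≤ leftLim (cdf μ) x :=
  (cdf_nonneg μ (x - 1)).trans ((monotone_cdf μ).le_leftLim (by linarith))

lemma exists_leftLim_cdf_le_le_cdf {t : ℝ} (ht0 : 0 < t) (ht1 : t < 1) :
    ∃ q, leftLim (cdf μ) q ≤ t ∧ t ≤ cdf μ q := by
  set E := {x | t < cdf μ x}
  have hne : E.Nonempty := ((tendsto_cdf_atTop μ).eventually (eventually_gt_nhds ht1)).exists
  obtain ⟨b, hb⟩ :=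
    ((tendsto_cdf_atBot μ).eventually (eventually_lt_nhds ht0)).exists_forall_of_atBot
  have hbdd : BddBelow E := ⟨b, fun y hy => not_lt.mp fun hyb => (hb y hyb.le).not_gt hy⟩
  refine ⟨sInf E, ?_, ?_⟩
  · refine le_of_tendsto ((monotone_cdf μ).tendsto_leftLim _) ?_
    filter_upwards [self_mem_nhdsWithin] with x hx
    exact not_lt.mp fun hxE => (csInf_le hbdd hxE).not_gt hx
  · refine ge_of_tendsto (((cdf μ).right_continuous _).tendsto.mono_left
      (nhdsWithin_mono _ Ioi_subset_Ici_self)) ?_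
    filter_upwards [self_mem_nhdsWithin] with y hy
    obtain ⟨z, hz, hzy⟩ := exists_lt_of_csInf_lt hne hy
    exact hz.le.trans (monotone_cdf μ hzy.le)

variable [IsProbabilityMeasure μ]

lemma measureReal_Iio_eq_leftLim_cdf (x : ℝ) : μ.real (Iio x) = leftLim (cdf μ) x := by
  have h := (cdf μ).measure_Iio (tendsto_cdf_atBot μ) x
  rw [measure_cdf, sub_zero] at h
  rw [measureReal_def, h, ENNReal.toReal_ofReal (leftLim_cdf_nonneg μ x)]

lemma measure_Iio_eq_ofReal_leftLim_cdf (x : ℝ) :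
    μ (Iio x) = ENNReal.ofReal (leftLim (cdf μ) x) := by
  rw [← measureReal_Iio_eq_leftLim_cdf, ofReal_measureReal]

lemma measure_singleton_eq_ofReal_cdf_sub_leftLim (x : ℝ) :
    μ {x} = ENNReal.ofReal (cdf μ x - leftLim (cdf μ) x) := by
  rw [← (cdf μ).measure_singleton x, measure_cdf]

lemma ae_cdf_pos : ∀ᵐ x ∂μ, 0 < cdf μ x := by
  simp_rw [ae_iff, not_lt]
  refine measure_eq_zero_of_forall_measure_inter_Iic_eq_zero fun x hx => ?_
  refine measure_mono_null inter_subset_right ?_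
  rw [← ofReal_cdf, ENNReal.ofReal_eq_zero]
  exact hx

lemma ae_cdf_lt_cdf_of_lt (q : ℝ) : ∀ᵐ x ∂μ, q < x → cdf μ q < cdf μ x := by
  simp_rw [ae_iff, Classical.not_imp, not_lt]
  refine measure_eq_zero_of_forall_measure_inter_Iic_eq_zero fun x hx => ?_
  refine measure_mono_null (t := Ioc q x) (fun y hy => ⟨hy.1.1, hy.2⟩) ?_
  have h := (cdf μ).measure_Ioc q x
  rw [measure_cdf] at h
  rw [h, ENNReal.ofReal_eq_zero, sub_nonpos]
  exact hx.2

end CDF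

noncomputable def randomizedCDF (μ : Measure ℝ) (x v : ℝ) : ℝ :=
  cdf μ x - (1 - v) * (cdf μ x - leftLim (cdf μ) x)

section RandomizedCDF

variable (μ : Measure ℝ)

lemma randomizedCDF_eq_leftLim_add (x v : ℝ) :
    randomizedCDF μ x v = leftLim (cdf μ) x + v * (cdf μ x - leftLim (cdf μ) x) := by
  rw [randomizedCDF]
  ring

lemma measurable_randomizedCDF : Measurable fun p : ℝ × ℝ => randomizedCDF μ p.1 p.2 := by
  have hF := (monotone_cdf μ).measurable
  have hFl := (monotone_cdf μ).leftLim.measurable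
  unfold randomizedCDF
  fun_prop

lemma uniform_setOf_randomizedCDF_le_eq_one {x t : ℝ} (h : cdf μ x ≤ t) :
    𝒰 {v | randomizedCDF μ x v ≤ t} = 1 :=
  uniform_eq_one fun v hv => by
    rw [mem_ofPred_eq, randomizedCDF]
    nlinarith [leftLim_cdf_le_cdf μ x, hv.2]

lemma cdf_le_of_uniform_setOf_randomizedCDF_le_ne_zero {x t : ℝ}
    (ht : t ≤ leftLim (cdf μ) x) (h : 𝒰 {v | randomizedCDF μ x v ≤ t} ≠ 0) : cdf μ x ≤ t := by
  obtain ⟨v, hv, hvt⟩ := exists_mem_Ioo_of_uniform_ne_zero h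
  rw [mem_ofPred_eq, randomizedCDF_eq_leftLim_add] at hvt
  have hJ : cdf μ x - leftLim (cdf μ) x ≤ 0 := le_of_mul_le_mul_left (by linarith) hv.1
  nlinarith [mul_nonneg hv.1.le (sub_nonneg.mpr (leftLim_cdf_le_cdf μ x))]

variable [IsProbabilityMeasure μ]

lemma uniform_setOf_randomizedCDF_le_mul_measure_singleton {q t : ℝ}
    (hq : leftLim (cdf μ) q ≤ t) (hq' : t ≤ cdf μ q) :
    𝒰 {v | randomizedCDF μ q v ≤ t} * μ {q} = ENNReal.ofReal (t - leftLim (cdf μ) q) := by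
  rw [measure_singleton_eq_ofReal_cdf_sub_leftLim]
  rcases (sub_nonneg.mpr (leftLim_cdf_le_cdf μ q)).eq_or_lt with hJ | hJ
  · rw [← hJ, ENNReal.ofReal_zero, mul_zero, eq_comm, ENNReal.ofReal_eq_zero]
    linarith
  have hset : {v | randomizedCDF μ q v ≤ t}
      = Iic ((t - leftLim (cdf μ) q) / (cdf μ q - leftLim (cdf μ) q)) := by
    ext v
    rw [mem_ofPred_eq, mem_Iic, randomizedCDF_eq_leftLim_add, le_div_iff₀ hJ]
    constructor <;> intro h <;> linarith
  rw [hset, uniform_Iic, min_eq_left ((div_le_one hJ).mpr (by linarith)),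
    ← ENNReal.ofReal_mul (div_nonneg (by linarith) hJ.le), div_mul_cancel₀ _ hJ.ne']

theorem lintegral_uniform_setOf_randomizedCDF_le (t : ℝ) :
    ∫⁻ x, 𝒰 {v | randomizedCDF μ x v ≤ t} ∂μ = 𝒰 (Iic t) := by
  rw [uniform_Iic]
  rcases le_or_gt t 0 with ht0 | ht0
  · rw [ENNReal.ofReal_eq_zero.mpr ((min_le_left _ _).trans ht0), ← lintegral_zero]
    refine lintegral_congr_ae ?_
    filter_upwards [ae_cdf_pos μ] with x hx
    by_contra h
    exact hx.not_ge ((cdf_le_of_uniform_setOf_randomizedCDF_le_ne_zero μ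
      (ht0.trans (leftLim_cdf_nonneg μ x)) h).trans ht0)
  rcases le_or_gt 1 t with ht1 | ht1
  · rw [min_eq_right ht1, ENNReal.ofReal_one, lintegral_congr fun x =>
      uniform_setOf_randomizedCDF_le_eq_one μ ((cdf_le_one μ x).trans ht1), lintegral_one,
      measure_univ]
  obtain ⟨q, hq, hq'⟩ := exists_leftLim_cdf_le_le_cdf μ ht0 ht1
  have hIio : ∫⁻ x in Iio q, 𝒰 {v | randomizedCDF μ x v ≤ t} ∂μ = μ (Iio q) := by
    rw [setLIntegral_congr_fun measurableSet_Iio fun x hx =>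
      uniform_setOf_randomizedCDF_le_eq_one μ (((monotone_cdf μ).le_leftLim hx).trans hq),
      setLIntegral_one]
  have hIoi : ∫⁻ x in Ioi q, 𝒰 {v | randomizedCDF μ x v ≤ t} ∂μ = 0 := by
    rw [← lintegral_zero (μ := μ.restrict (Ioi q))]
    refine setLIntegral_congr_fun_ae measurableSet_Ioi ?_
    filter_upwards [ae_cdf_lt_cdf_of_lt μ q] with x hx hqx
    by_contra h
    have := cdf_le_of_uniform_setOf_randomizedCDF_le_ne_zero μ
      (hq'.trans ((monotone_cdf μ).le_leftLim hqx)) h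
    linarith [hx hqx]
  rw [lintegral_eq_setLIntegral_Iio_add_singleton_add_Ioi μ _ q, hIio, hIoi,
    uniform_setOf_randomizedCDF_le_mul_measure_singleton μ hq hq', add_zero, min_eq_left ht1.le,
    measure_Iio_eq_ofReal_leftLim_cdf, ← ENNReal.ofReal_add (leftLim_cdf_nonneg μ q)
      (sub_nonneg.mpr hq), add_sub_cancel]

theorem map_prod_uniform_randomizedCDF :
    ((μ.prod 𝒰).map fun p => randomizedCDF μ p.1 p.2) = 𝒰 := by
  have hΦ := measurable_randomizedCDF μ
  have : IsProbabilityMeasure 𝒰 := ⟨uniform_eq_one (subset_univ _)⟩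
  have := Measure.isProbabilityMeasure_map (μ := μ.prod 𝒰) hΦ.aemeasurable
  refine Measure.ext_of_Iic _ _ fun t => ?_
  rw [Measure.map_apply hΦ measurableSet_Iic, Measure.prod_apply (hΦ measurableSet_Iic)]
  exact lintegral_uniform_setOf_randomizedCDF_le μ t

end RandomizedCDF

variable {Ω α : Type*} {mΩ : MeasurableSpace Ω} {mα : MeasurableSpace α}

lemma Kernel.measurable_apply_setOf {β γ : Type*} {_ : MeasurableSpace β}
    {_ : MeasurableSpace γ} (κ : Kernel α β) [IsSFiniteKernel κ] {s : Set (γ × β)}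
    (hs : MeasurableSet s) : Measurable fun p : α × γ => κ p.1 {y | (p.2, y) ∈ s} :=
  Kernel.measurable_kernel_prodMk_left (κ := κ.prodMkRight γ)
    (t := {q : (α × γ) × β | (q.1.2, q.2) ∈ s}) ((measurable_fst.snd.prodMk measurable_snd) hs)

lemma Kernel.measurable_randomizedCDF (κ : Kernel α ℝ) [IsMarkovKernel κ] :
    Measurable fun p : (α × ℝ) × ℝ => randomizedCDF (κ p.1.1) p.1.2 p.2 := by
  have hIic := (κ.measurable_apply_setOf
    (measurableSet_le measurable_snd measurable_fst)).ennreal_toReal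
  have hIio := (κ.measurable_apply_setOf
    (measurableSet_lt measurable_snd measurable_fst)).ennreal_toReal
  simp_rw [randomizedCDF, ← measureReal_Iio_eq_leftLim_cdf, cdf_eq_real, measureReal_def]
  exact (hIic.comp measurable_fst).sub ((measurable_const.sub measurable_snd).mul
    ((hIic.comp measurable_fst).sub (hIio.comp measurable_fst)))

theorem map_compProd_prod_uniform_randomizedCDF (μ : Measure α) [SigmaFinite μ]
    (κ : Kernel α ℝ) [IsMarkovKernel κ] :
    (((μ ⊗ₘ κ).prod 𝒰).map fun p => (p.1.1, randomizedCDF (κ p.1.1) p.1.2 p.2)) = μ.prod 𝒰 := by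
  set Ψ : (α × ℝ) × ℝ → α × ℝ := fun p => (p.1.1, randomizedCDF (κ p.1.1) p.1.2 p.2)
  have hΨ : Measurable Ψ := measurable_fst.fst.prodMk κ.measurable_randomizedCDF
  refine (Measure.prod_eq fun A B hA hB => ?_).symm
  have hS := hΨ (hA.prod hB)
  have hfiber (a : α) :
      ∫⁻ x, 𝒰 (Prod.mk (a, x) ⁻¹' (Ψ ⁻¹' A ×ˢ B)) ∂κ a = A.indicator (fun _ => 𝒰 B) a := by
    by_cases ha : a ∈ A
    · have hsec (x : ℝ) : Prod.mk (a, x) ⁻¹' (Ψ ⁻¹' A ×ˢ B)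
          = Prod.mk x ⁻¹' ((fun p => randomizedCDF (κ a) p.1 p.2) ⁻¹' B) := by
        ext v
        simp [Ψ, ha]
      rw [indicator_of_mem ha, lintegral_congr fun x => congrArg 𝒰 (hsec x),
        ← Measure.prod_apply (measurable_randomizedCDF _ hB),
        ← Measure.map_apply (measurable_randomizedCDF _) hB, map_prod_uniform_randomizedCDF]
    · have hsec (x : ℝ) : Prod.mk (a, x) ⁻¹' (Ψ ⁻¹' A ×ˢ B) = ∅ := by
        ext v
        simp [Ψ, ha]
      simp [hsec, ha]
  rw [Measure.map_apply hΨ (hA.prod hB), Measure.prod_apply hS,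
    Measure.lintegral_compProd (measurable_measure_prodMk_left hS), lintegral_congr hfiber,
    lintegral_indicator_const hA, mul_comm]

lemma map_prodMk_eq_compProd {β : Type*} {mβ : MeasurableSpace β} {P : Measure Ω}
    [IsProbabilityMeasure P] {Z : Ω → α} {X : Ω → β} (hZ : Measurable Z) (hX : Measurable X)
    {κ : Kernel α β} [IsMarkovKernel κ]
    (h : ∀ A B, MeasurableSet A → MeasurableSet B →
      P (Z ⁻¹' A ∩ X ⁻¹' B) = ∫⁻ ω in Z ⁻¹' A, κ (Z ω) B ∂P) :
    P.map (fun ω => (Z ω, X ω)) = P.map Z ⊗ₘ κ := by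
  have := Measure.isProbabilityMeasure_map (μ := P) hZ.aemeasurable
  have := Measure.isProbabilityMeasure_map (μ := P) (hZ.prodMk hX).aemeasurable
  refine ext_of_generate_finite _ generateFrom_prod.symm isPiSystem_prod ?_ (by simp)
  rintro _ ⟨A, hA, B, hB, rfl⟩
  rw [Measure.map_apply (hZ.prodMk hX) (hA.prod hB), Measure.compProd_apply_prod hA hB,
    mk_preimage_prod, h A B hA hB, setLIntegral_map hA (κ.measurable_coe hB) hZ]

theorem indepFun_and_map_randomizedCDF {P : Measure Ω} [IsProbabilityMeasure P] {Z : Ω → α}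
    {X V : Ω → ℝ} (hZ : Measurable Z) (hX : Measurable X) (hV : Measurable V)
    {κ : Kernel α ℝ} [IsMarkovKernel κ] (hκ : P.map (fun ω => (Z ω, X ω)) = P.map Z ⊗ₘ κ)
    (hV_unif : P.map V = 𝒰) (hindep : IndepFun (fun ω => (Z ω, X ω)) V P) :
    IndepFun Z (fun ω => randomizedCDF (κ (Z ω)) (X ω) (V ω)) P ∧
      P.map (fun ω => randomizedCDF (κ (Z ω)) (X ω) (V ω)) = 𝒰 := by
  have := Measure.isProbabilityMeasure_map (μ := P) hZ.aemeasurable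
  have hZX := hZ.prodMk hX
  have hW : Measurable fun ω => randomizedCDF (κ (Z ω)) (X ω) (V ω) :=
    κ.measurable_randomizedCDF.comp (f := fun ω => ((Z ω, X ω), V ω)) (hZX.prodMk hV)
  have hlaw : P.map (fun ω => (Z ω, randomizedCDF (κ (Z ω)) (X ω) (V ω))) = (P.map Z).prod 𝒰 := by
    rw [← map_compProd_prod_uniform_randomizedCDF (P.map Z) κ, ← hκ, ← hV_unif,
      ← (indepFun_iff_map_prod_eq_prod_map_map hZX.aemeasurable hV.aemeasurable).mp hindep,
      Measure.map_map (measurable_fst.fst.prodMk κ.measurable_randomizedCDF) (hZX.prodMk hV)]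
    rfl
  have hmap : P.map (fun ω => randomizedCDF (κ (Z ω)) (X ω) (V ω)) = 𝒰 := by
    rw [← Measure.snd_map_prodMk hZ, hlaw, Measure.snd_prod]
  refine ⟨?_, hmap⟩
  rw [indepFun_iff_map_prod_eq_prod_map_map hZ.aemeasurable hW.aemeasurable, hlaw, hmap]

end ProbabilityTheory

/-- **Conditional generalized probability integral transform.**
Let `𝒢` be a sub-σ-algebra, `κ` a regular conditional distribution of `X` given `𝒢`,
`F (x|ω)` the conditional CDF, `Fm` its left limit in `x`, `J := F - Fm` the jump.
If `V` is uniform on `(0,1)` and independent of `σ(𝒢, X)`, then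
`W ω := F (X ω | ω) - (1 - V ω) * J (X ω | ω)` is uniform on `(0,1)`
and `W` is independent of `𝒢`. -/
theorem conditional_generalized_PIT
    {Ω : Type*} (𝒢 : MeasurableSpace Ω) [mΩ : MeasurableSpace Ω]
    (P : Measure Ω) [IsProbabilityMeasure P] (h𝒢 : 𝒢 ≤ mΩ)
    (X V : Ω → ℝ) (hX : Measurable X) (hV : Measurable V)
    -- κ is a regular conditional distribution of X given 𝒢:
    (κ : Ω → Measure ℝ)
    (hκprob : ∀ ω, IsProbabilityMeasure (κ ω))
    (hκmeas : ∀ B : Set ℝ, MeasurableSet B → Measurable[𝒢] fun ω => κ ω B)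
    (hκcond : ∀ B : Set ℝ, MeasurableSet B →
      (fun ω => (κ ω B).toReal)
        =ᵐ[P] P[(X ⁻¹' B).indicator (fun _ => (1 : ℝ)) | 𝒢])
    -- conditional CDF, its left limit, and jump function:
    (F Fm J : ℝ → Ω → ℝ)
    (hF : ∀ x ω, F x ω = (κ ω (Set.Iic x)).toReal)
    (hFm : ∀ x ω, Tendsto (fun y => F y ω) (nhdsWithin x (Set.Iio x)) (nhds (Fm x ω)))
    (hJ : ∀ x ω, J x ω = F x ω - Fm x ω)
    -- V is uniform on (0,1) and independent of the σ-algebra generated by 𝒢 and X: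
    (hVunif : Measure.map V P = volume.restrict (Set.Ioo (0 : ℝ) 1))
    (hindep : Indep (MeasurableSpace.comap V inferInstance)
      (𝒢 ⊔ MeasurableSpace.comap X inferInstance) P)
    (W : Ω → ℝ) (hW : ∀ ω, W ω = F (X ω) ω - (1 - V ω) * J (X ω) ω) :
    Measure.map W P = volume.restrict (Set.Ioo (0 : ℝ) 1) ∧
      Indep (MeasurableSpace.comap W inferInstance) 𝒢 P := by
  let η : Kernel[𝒢] Ω ℝ := @Kernel.mk Ω ℝ 𝒢 _ κ (Measure.measurable_of_measurable_coe κ hκmeas)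
  have : IsMarkovKernel η := ⟨hκprob⟩
  have hF_cdf (x : ℝ) (ω : Ω) : F x ω = cdf (κ ω) x := by rw [hF, cdf_eq_real]; rfl
  have hFm_leftLim (x : ℝ) (ω : Ω) : Fm x ω = leftLim (cdf (κ ω)) x :=
    tendsto_nhds_unique (hFm x ω)
      (by simpa only [hF_cdf] using (monotone_cdf (κ ω)).tendsto_leftLim x)
  have hW_eq : W = fun ω => randomizedCDF (η (id ω)) (X ω) (V ω) := funext fun ω => by
    rw [hW, hJ, hFm_leftLim, hF_cdf]
    rfl
  -- The general results are applied to `Z := id : (Ω, mΩ) → (Ω, 𝒢)`.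
  have hlaw := map_prodMk_eq_compProd (mα := 𝒢) (P := P) (measurable_id'' h𝒢) hX (κ := η)
    fun A B hA hB => (setLIntegral_eq_measure_inter_of_toReal_ae_eq_condExp h𝒢 (hX hB) hA
      (ae_of_all _ fun ω => measure_ne_top (κ ω) B) (hκcond B hB)).symm
  have hindep_pair := (IndepFun_iff_Indep (mβ := 𝒢.prod inferInstance)
    (fun ω => (id ω, X ω)) V P).mpr
      (by rw [MeasurableSpace.comap_prodMk, MeasurableSpace.comap_id]; exact hindep.symm)
  obtain ⟨hind, hmap⟩ := indepFun_and_map_randomizedCDF (mα := 𝒢) (measurable_id'' h𝒢) hX hV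
    hlaw hVunif hindep_pair
  have h𝒢_indep := (IndepFun_iff_Indep (mγ := 𝒢) _ _ _).mp hind.symm
  rw [MeasurableSpace.comap_id] at h𝒢_indep
  rw [hW_eq]
  exact ⟨hmap, h𝒢_indep⟩
end

section
/- Let X be an integer-valued random variable with CDF F, let V be uniformly distributed on (0,1) and independent of X, and set Z := X − V. Let G be the CDF of Z. Then G is a continuous function, and for every real z, G(z) = F(⌊z⌋) + (z − ⌊z⌋)·(F(⌊z⌋ + 1) − F(⌊z⌋)); that is, G is the piecewise-linear interpolation of F between consecutive integers. -/
/-!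
For `v ∈ [0, 1]`, an integer `x` satisfies `x - v ≤ z` exactly when `x ≤ ⌊z⌋`, or `x = ⌊z⌋ + 1`
and `v ≥ 1 - fract z`. By independence the second event has probability
`P(X = ⌊z⌋ + 1) · fract z = (F (⌊z⌋ + 1) - F ⌊z⌋) · fract z`, which gives the formula; it makes `G`
affine on every `[n, n + 1]`, so `G` is continuous.
-/

open MeasureTheory ProbabilityTheory Filter Set

lemma continuous_of_continuousOn_Icc_intCast {β : Type*} [TopologicalSpace β] {f : ℝ → β}
    (hf : ∀ n : ℤ, ContinuousOn f (Icc (n : ℝ) (n + 1))) : Continuous f := by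
  refine continuous_iff_continuousAt.2 fun z => continuousAt_iff_continuous_left_right.2 ⟨?_, ?_⟩
  · have hlt : ((⌈z⌉ - 1 : ℤ) : ℝ) < z := by push_cast; linarith [Int.ceil_lt_add_one z]
    have hle : z ≤ ((⌈z⌉ - 1 : ℤ) : ℝ) + 1 := by push_cast; linarith [Int.le_ceil z]
    exact (hf _ z ⟨hlt.le, hle⟩).mono_of_mem_nhdsWithin <|
      mem_of_superset (Icc_mem_nhdsLE hlt) (Icc_subset_Icc_right hle)
  · have hlt := Int.lt_floor_add_one z
    exact (hf ⌊z⌋ z ⟨Int.floor_le z, hlt.le⟩).mono_of_mem_nhdsWithin <|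
      mem_of_superset (Icc_mem_nhdsGE hlt) (Icc_subset_Icc_left (Int.floor_le z))

lemma continuous_floor_interpolation (F : ℝ → ℝ) :
    Continuous fun z : ℝ => F ⌊z⌋ + (z - ⌊z⌋) * (F (⌊z⌋ + 1) - F ⌊z⌋) := by
  refine continuous_of_continuousOn_Icc_intCast fun n => ?_
  have hlin : Continuous fun z : ℝ => F n + (z - n) * (F (n + 1) - F n) := by fun_prop
  refine hlin.continuousOn.congr fun z hz => ?_
  rcases hz.2.eq_or_lt with rfl | hlt
  · rw [Int.floor_add_one, Int.floor_intCast]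
    push_cast
    ring
  · rw [Int.floor_eq_iff.2 ⟨hz.1, hlt⟩]

lemma intCast_sub_le_iff {x : ℤ} {v z : ℝ} (hv : v ∈ Icc (0 : ℝ) 1) :
    (x : ℝ) - v ≤ z ↔ x ≤ ⌊z⌋ ∨ (x = ⌊z⌋ + 1 ∧ 1 - Int.fract z ≤ v) := by
  obtain ⟨hv0, hv1⟩ := hv
  have hfloor := Int.floor_le z
  have hfloor' := Int.lt_floor_add_one z
  rw [← Int.self_sub_floor]
  rcases lt_trichotomy x (⌊z⌋ + 1) with hx | rfl | hx
  · have hx' : x ≤ ⌊z⌋ := Int.lt_add_one_iff.1 hx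
    have : (x : ℝ) ≤ ⌊z⌋ := by exact_mod_cast hx'
    simp only [hx', true_or, iff_true]
    linarith
  · have : ¬ ⌊z⌋ + 1 ≤ ⌊z⌋ := by omega
    simp only [this, false_or, true_and, Int.cast_add, Int.cast_one]
    constructor <;> intro h <;> linarith
  · have h1 : ¬ x ≤ ⌊z⌋ := by omega
    have h2 : x ≠ ⌊z⌋ + 1 := by omega
    have : (⌊z⌋ : ℝ) + 2 ≤ x := by exact_mod_cast (show ⌊z⌋ + 2 ≤ x by omega)
    simp only [h1, h2, false_or, false_and, iff_false, not_le]
    linarith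

namespace ProbabilityTheory

lemma IndepFun.measureReal_inter_preimage_eq_mul {Ω α β : Type*} [MeasurableSpace Ω]
    [MeasurableSpace α] [MeasurableSpace β] {P : Measure Ω} {f : Ω → α} {g : Ω → β}
    (h : IndepFun f g P) {s : Set α} {t : Set β} (hs : MeasurableSet s) (ht : MeasurableSet t) :
    P.real (f ⁻¹' s ∩ g ⁻¹' t) = P.real (f ⁻¹' s) * P.real (g ⁻¹' t) := by
  simp only [measureReal_def, h.measure_inter_preimage_eq_mul _ _ hs ht, ENNReal.toReal_mul]

end ProbabilityTheory

section SmoothedIntegerVariable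

variable {Ω : Type*} [MeasurableSpace Ω] {P : Measure Ω} {X : Ω → ℤ} {V : Ω → ℝ}

lemma measureReal_preimage_Iic_add_one [IsFiniteMeasure P] (hX : Measurable X) (n : ℤ) :
    P.real (X ⁻¹' Iic (n + 1)) = P.real (X ⁻¹' Iic n) + P.real (X ⁻¹' {n + 1}) := by
  have hdisj : Disjoint (X ⁻¹' Iic n) (X ⁻¹' {n + 1}) :=
    (disjoint_singleton_right.2 (by simp)).preimage X
  rw [← measureReal_union hdisj (hX (measurableSet_singleton _)), ← preimage_union]
  congr 2
  ext m
  simp only [mem_Iic, mem_union, mem_singleton_iff]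
  omega

lemma ae_mem_of_map_eq_restrict {β : Type*} [MeasurableSpace β] {Y : Ω → β} {μ : Measure β}
    {s : Set β} (hY : Measurable Y) (hs : MeasurableSet s) (hmap : P.map Y = μ.restrict s) :
    ∀ᵐ ω ∂P, Y ω ∈ s :=
  ae_of_ae_map hY.aemeasurable (hmap ▸ ae_restrict_mem hs)

lemma measureReal_preimage_Ici_of_map_eq_uniform (hV : Measurable V)
    (hVunif : P.map V = volume.restrict (Ioo (0 : ℝ) 1)) {a : ℝ} (ha0 : 0 < a) (ha1 : a ≤ 1) :
    P.real (V ⁻¹' Ici a) = 1 - a := by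
  have hinter : Ici a ∩ Ioo 0 1 = Ico a 1 := by
    ext v
    simp only [mem_inter_iff, mem_Ici, mem_Ioo, mem_Ico]
    constructor
    · rintro ⟨hav, -, hv1⟩; exact ⟨hav, hv1⟩
    · rintro ⟨hav, hv1⟩; exact ⟨hav, ha0.trans_le hav, hv1⟩
  rw [← map_measureReal_apply hV measurableSet_Ici, hVunif,
    measureReal_restrict_apply measurableSet_Ici, hinter, Real.volume_real_Ico_of_le ha1]

lemma measureReal_intCast_sub_le [IsFiniteMeasure P] (hX : Measurable X) (hV : Measurable V)
    (hVunif : P.map V = volume.restrict (Ioo (0 : ℝ) 1)) (hindep : IndepFun X V P) (z : ℝ) :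
    P.real {ω | (X ω : ℝ) - V ω ≤ z} =
      P.real (X ⁻¹' Iic ⌊z⌋) + P.real (X ⁻¹' {⌊z⌋ + 1}) * Int.fract z := by
  have hae : {ω | (X ω : ℝ) - V ω ≤ z} =ᵐ[P]
      (X ⁻¹' Iic ⌊z⌋ ∪ (X ⁻¹' {⌊z⌋ + 1} ∩ V ⁻¹' Ici (1 - Int.fract z)) : Set Ω) := by
    filter_upwards [ae_mem_of_map_eq_restrict hV measurableSet_Ioo hVunif] with ω hω
    exact propext (intCast_sub_le_iff (Ioo_subset_Icc_self hω))
  have hdisj : Disjoint (X ⁻¹' Iic ⌊z⌋) (X ⁻¹' {⌊z⌋ + 1} ∩ V ⁻¹' Ici (1 - Int.fract z)) :=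
    ((disjoint_singleton_right.2 (by simp)).preimage X).mono_right inter_subset_left
  rw [measureReal_congr hae,
    measureReal_union hdisj ((hX (measurableSet_singleton _)).inter (hV measurableSet_Ici)),
    hindep.measureReal_inter_preimage_eq_mul (measurableSet_singleton _) measurableSet_Ici,
    measureReal_preimage_Ici_of_map_eq_uniform hV hVunif (by linarith [Int.fract_lt_one z])
      (by linarith [Int.fract_nonneg z]), sub_sub_cancel]

end SmoothedIntegerVariable

/-- **Smoothing an integer-valued random variable.**
Let `X` be an integer-valued random variable with CDF `F`, let `V` be uniform on `(0,1)`
and independent of `X`, and set `Z := X - V` with CDF `G`.  Then `G` is continuous and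
is the piecewise-linear interpolation of `F` between consecutive integers:
`G z = F ⌊z⌋ + (z - ⌊z⌋) * (F (⌊z⌋ + 1) - F ⌊z⌋)`. -/
theorem cdf_of_smoothed_integer_rv
    {Ω : Type*} [MeasurableSpace Ω] (P : Measure Ω) [IsProbabilityMeasure P]
    (X : Ω → ℤ) (V : Ω → ℝ) (hX : Measurable X) (hV : Measurable V)
    (hVunif : Measure.map V P = volume.restrict (Set.Ioo (0 : ℝ) 1))
    (hindep : IndepFun X V P)
    (Z : Ω → ℝ) (hZ : ∀ ω, Z ω = (X ω : ℝ) - V ω)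
    (F G : ℝ → ℝ)
    (hF : ∀ x, F x = (P {ω | (X ω : ℝ) ≤ x}).toReal)
    (hG : ∀ z, G z = (P {ω | Z ω ≤ z}).toReal) :
    Continuous G ∧
      ∀ z : ℝ, G z = F (⌊z⌋ : ℝ)
        + (z - (⌊z⌋ : ℝ)) * (F ((⌊z⌋ : ℝ) + 1) - F (⌊z⌋ : ℝ)) := by
  have hF_int : ∀ n : ℤ, F n = P.real (X ⁻¹' Iic n) := fun n => by
    rw [hF, measureReal_def]
    congr 2
    ext ω
    simp only [mem_ofPred_eq, mem_preimage, mem_Iic, Int.cast_le]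
  have hF_succ : ∀ n : ℤ, F (n + 1) = F n + P.real (X ⁻¹' {n + 1}) := fun n => by
    have h := hF_int (n + 1)
    push_cast at h
    rw [h, hF_int, measureReal_preimage_Iic_add_one hX]
  have hG_eq : ∀ z : ℝ, G z = F ⌊z⌋ + (z - ⌊z⌋) * (F (⌊z⌋ + 1) - F ⌊z⌋) := fun z => by
    simp only [hG, hZ, ← measureReal_def]
    rw [measureReal_intCast_sub_le hX hV hVunif hindep, hF_succ, hF_int, Int.self_sub_floor]
    ring
  exact ⟨(continuous_floor_interpolation F).congr fun z => (hG_eq z).symm, hG_eq⟩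
end

section
/- Let Φ denote the standard normal CDF and φ its density, and for m ∈ ℝ and s > 0 let φ_{m,s} denote the density of the normal distribution with mean m and standard deviation s. Let F̂ : ℝ → (0,1) be a strictly increasing, continuously differentiable bijection onto (0,1) with everywhere positive derivative f̂. Let p be normally distributed with mean μ and standard deviation σ > 0, and for constants τ_mean ∈ ℝ and τ_sd > 0 define T := F̂⁻¹(Φ(τ_sd·p + τ_mean)). Then T has an absolutely continuous law with density f*(t) = (1/τ_sd)·φ_{μ,σ}((Φ⁻¹(F̂(t)) − τ_mean)/τ_sd)·f̂(t)/φ(Φ⁻¹(F̂(t))), and CDF F*(t) = Φ((1/σ)·[(Φ⁻¹(F̂(t)) − τ_mean)/τ_sd − μ]). -/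
/-!
Write `T = g ∘ p` with `g x = F̂⁻¹ (Φ (τsd x + τmean))`. This `g` is a strictly increasing
bijection of `ℝ` whose inverse `A t = (Φ⁻¹ (F̂ t) - τmean) / τsd` is differentiable, with
`A' = f̂ / (τsd · φ ∘ Φ⁻¹ ∘ F̂)` by the inverse function theorem applied to `Φ`. One-dimensional
change of variables then gives `T` the density `A' · (φ_{μ,σ} ∘ A)`, and monotonicity gives
`P (T ≤ t) = P (p ≤ A t) = Φ ((A t - μ) / σ)`.
-/

open MeasureTheory ProbabilityTheory Filter Set
open scoped ENNReal

/-- The density of the normal distribution with mean `m` and standard deviation `s`. -/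
noncomputable def normalPdf (m s u : ℝ) : ℝ :=
  (s * Real.sqrt (2 * Real.pi))⁻¹ * Real.exp (-((u - m) ^ 2) / (2 * s ^ 2))

open Function

lemma normalPdf_eq_gaussianPDFReal {s : ℝ} (hs : 0 < s) (m : ℝ) :
    normalPdf m s = gaussianPDFReal m ⟨s ^ 2, sq_nonneg s⟩ := by
  funext u
  have hsqrt : Real.sqrt (2 * Real.pi * s ^ 2) = s * Real.sqrt (2 * Real.pi) := by
    rw [Real.sqrt_mul (by positivity), Real.sqrt_sq hs.le]; ring
  simp only [normalPdf, gaussianPDFReal, neg_div]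
  rw [← hsqrt]
  rfl

lemma normalPdf_pos {s : ℝ} (hs : 0 < s) (m u : ℝ) : 0 < normalPdf m s u := by
  rw [normalPdf_eq_gaussianPDFReal hs]
  exact gaussianPDFReal_pos _ _ _ (fun h => (pow_pos hs 2).ne' (congrArg Subtype.val h))

lemma continuous_normalPdf (m s : ℝ) : Continuous (normalPdf m s) := by
  unfold normalPdf; fun_prop

lemma integrable_normalPdf {s : ℝ} (hs : 0 < s) (m : ℝ) : Integrable (normalPdf m s) := by
  rw [normalPdf_eq_gaussianPDFReal hs]
  exact integrable_gaussianPDFReal _ _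

lemma integral_normalPdf {s : ℝ} (hs : 0 < s) (m : ℝ) : ∫ u, normalPdf m s u = 1 := by
  rw [normalPdf_eq_gaussianPDFReal hs]
  exact integral_gaussianPDFReal_eq_one _ (fun h => (pow_pos hs 2).ne' (congrArg Subtype.val h))

lemma normalPdf_eq_inv_mul_normalPdf_zero_one {s : ℝ} (hs : 0 < s) (m u : ℝ) :
    normalPdf m s u = s⁻¹ * normalPdf 0 1 ((u - m) / s) := by
  simp only [normalPdf]
  field_simp
  ring_nf

section CDF

variable {f Φ : ℝ → ℝ} (hΦ : ∀ x, Φ x = ∫ u in Iic x, f u)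
include hΦ

lemma cdf_sub_cdf (hfi : Integrable f) (x y : ℝ) : Φ y - Φ x = ∫ u in x..y, f u := by
  rw [hΦ, hΦ]
  exact intervalIntegral.integral_Iic_sub_Iic hfi.integrableOn hfi.integrableOn

lemma hasStrictDerivAt_cdf (hfc : Continuous f) (hfi : Integrable f) (x : ℝ) :
    HasStrictDerivAt Φ (f x) x := by
  have hΦ_eq : Φ = fun y => (∫ u in (0 : ℝ)..y, f u) + Φ 0 := by
    funext y
    linarith [cdf_sub_cdf hΦ hfi 0 y]
  rw [hΦ_eq]
  exact (intervalIntegral.integral_hasStrictDerivAt_right hfi.intervalIntegrable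
    (hfc.stronglyMeasurableAtFilter _ _) hfc.continuousAt).add_const _

lemma cdf_strictMono (hfi : Integrable f) (hfpos : ∀ x, 0 < f x) : StrictMono Φ := by
  intro x y hxy
  have := intervalIntegral.intervalIntegral_pos_of_pos hfi.intervalIntegrable hfpos hxy
  linarith [cdf_sub_cdf hΦ hfi x y]

lemma cdf_mem_Ioo (hfi : Integrable f) (hfpos : ∀ x, 0 < f x) (hf_one : ∫ u, f u = 1)
    (x : ℝ) : Φ x ∈ Ioo 0 1 := by
  have hf_nonneg : 0 ≤ᵐ[volume] f := Eventually.of_forall fun u => (hfpos u).le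
  have hΦ_nonneg : 0 ≤ Φ (x - 1) := by
    rw [hΦ]; exact setIntegral_nonneg measurableSet_Iic fun u _ => (hfpos u).le
  have hΦ_le_one : Φ (x + 1) ≤ 1 := by
    rw [hΦ, ← hf_one]; exact setIntegral_le_integral hfi hf_nonneg
  have hmono := cdf_strictMono hΦ hfi hfpos
  exact ⟨hΦ_nonneg.trans_lt (hmono (by linarith)), (hmono (by linarith)).trans_le hΦ_le_one⟩

lemma hasDerivAt_cdf_inv (hfc : Continuous f) (hfi : Integrable f) (hfpos : ∀ x, 0 < f x)
    {Φinv : ℝ → ℝ} (hΦinv : LeftInverse Φinv Φ) {y : ℝ} (hy : Φ (Φinv y) = y) :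
    HasDerivAt Φinv (f (Φinv y))⁻¹ y := by
  have h := ((hasStrictDerivAt_cdf hΦ hfc hfi (Φinv y)).to_local_left_inverse
    (hfpos _).ne' (Eventually.of_forall hΦinv)).hasDerivAt
  rwa [hy] at h

end CDF

lemma StrictMono.preimage_Iic_of_leftInverse {α β : Type*} [LinearOrder α] [Preorder β]
    {g : α → β} {A : β → α} (hg : StrictMono g) (hgA : LeftInverse g A) (t : β) :
    g ⁻¹' Iic t = Iic (A t) := by
  ext x
  rw [mem_preimage, mem_Iic, mem_Iic, ← hg.le_iff_le, hgA t]

theorem map_withDensity_ofReal_of_leftInverse {g A A' : ℝ → ℝ} (hg : Measurable g)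
    (hA : ∀ t, HasDerivAt A (A' t) t) (hA' : ∀ t, 0 ≤ A' t) (hgA : LeftInverse g A)
    (hAg : LeftInverse A g) (ρ : ℝ → ℝ) :
    (volume.withDensity fun x => ENNReal.ofReal (ρ x)).map g =
      volume.withDensity fun t => ENNReal.ofReal (A' t * ρ (A t)) := by
  ext s hs
  simp only [ENNReal.ofReal_mul (hA' _)]
  rw [Measure.map_apply hg hs, withDensity_apply _ hs, withDensity_apply _ (hg hs),
    ← image_eq_preimage_of_inverse hgA hAg,
    lintegral_image_eq_lintegral_abs_deriv_mul hs (fun t _ => (hA t).hasDerivWithinAt)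
      hgA.injective.injOn]
  simp only [abs_of_nonneg (hA' _)]

lemma withDensity_normalPdf_eq_map {σ : ℝ} (hσ : 0 < σ) (μ : ℝ) :
    volume.withDensity (fun u => ENNReal.ofReal (normalPdf μ σ u)) =
      (volume.withDensity fun u => ENNReal.ofReal (normalPdf 0 1 u)).map (fun v => σ * v + μ) := by
  have hA : ∀ t, HasDerivAt (fun t => (t - μ) / σ) σ⁻¹ t := fun t => by
    simpa [div_eq_mul_inv] using ((hasDerivAt_id t).sub_const μ).div_const σ
  rw [map_withDensity_ofReal_of_leftInverse (by fun_prop) hA (fun _ => inv_nonneg.2 hσ.le)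
    (fun t => by field_simp; ring) (fun v => by field_simp; ring)]
  simp only [← normalPdf_eq_inv_mul_normalPdf_zero_one hσ]

lemma withDensity_normalPdf_Iic {Φ : ℝ → ℝ} (hΦ : ∀ x, Φ x = ∫ u in Iic x, normalPdf 0 1 u)
    {σ : ℝ} (hσ : 0 < σ) (μ c : ℝ) :
    volume.withDensity (fun u => ENNReal.ofReal (normalPdf μ σ u)) (Iic c) =
      ENNReal.ofReal (Φ ((c - μ) / σ)) := by
  have haff : StrictMono fun v => σ * v + μ := (strictMono_mul_left_of_pos hσ).add_const μ
  rw [withDensity_normalPdf_eq_map hσ, Measure.map_apply haff.monotone.measurable measurableSet_Iic,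
    haff.preimage_Iic_of_leftInverse (A := fun t => (t - μ) / σ) (fun t => by field_simp; ring),
    withDensity_apply _ measurableSet_Iic, hΦ, ofReal_integral_eq_lintegral_ofReal
      (integrable_normalPdf one_pos 0).restrict
      (Eventually.of_forall fun u => (normalPdf_pos one_pos 0 u).le)]

theorem map_comp_eq_withDensity_and_measure_le_of_strictMono {Ω : Type*} [MeasurableSpace Ω]
    {P : Measure Ω} {p : Ω → ℝ} (hp_meas : Measurable p) {ρ : ℝ → ℝ}
    (hp : P.map p = volume.withDensity fun x => ENNReal.ofReal (ρ x)) {g A A' : ℝ → ℝ}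
    (hg : StrictMono g) (hA : ∀ t, HasDerivAt A (A' t) t) (hA' : ∀ t, 0 ≤ A' t)
    (hgA : LeftInverse g A) (hAg : LeftInverse A g) :
    P.map (g ∘ p) = (volume.withDensity fun t => ENNReal.ofReal (A' t * ρ (A t))) ∧
      ∀ t, P {ω | (g ∘ p) ω ≤ t} =
        volume.withDensity (fun x => ENNReal.ofReal (ρ x)) (Iic (A t)) := by
  have hg_meas : Measurable g := hg.monotone.measurable
  refine ⟨?_, fun t => ?_⟩
  · rw [← Measure.map_map hg_meas hp_meas, hp,
      map_withDensity_ofReal_of_leftInverse hg_meas hA hA' hgA hAg]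
  · rw [← hp, Measure.map_apply hp_meas measurableSet_Iic, ← hg.preimage_Iic_of_leftInverse hgA]
    rfl

theorem hsdm_predictive_density_and_cdf_general
    {Ω : Type*} [MeasurableSpace Ω] (P : Measure Ω)
    -- the standard normal CDF and its inverse:
    (Φ Φinv : ℝ → ℝ)
    (hΦ : ∀ x, Φ x = ∫ u in Set.Iic x, normalPdf 0 1 u)
    (hΦinvL : ∀ x, Φinv (Φ x) = x)
    (hΦinvR : ∀ y ∈ Set.Ioo (0 : ℝ) 1, Φ (Φinv y) = y)
    -- F̂ : ℝ → (0,1) strictly increasing, continuously differentiable bijection onto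
    -- (0,1), with everywhere positive derivative f̂, and its inverse F̂inv:
    (Fhat Fhatinv fhat : ℝ → ℝ)
    (hFhatmono : StrictMono Fhat)
    (hFhatmem : ∀ t, Fhat t ∈ Set.Ioo (0 : ℝ) 1)
    (hFhatderiv : ∀ t, HasDerivAt Fhat (fhat t) t)
    (hfhatpos : ∀ t, 0 < fhat t)
    (hFhatinvL : ∀ t, Fhatinv (Fhat t) = t)
    (hFhatinvR : ∀ y ∈ Set.Ioo (0 : ℝ) 1, Fhat (Fhatinv y) = y)
    -- p is normally distributed with mean μ and standard deviation σ:
    (μ σ : ℝ) (hσ : 0 < σ)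
    (p : Ω → ℝ) (hpmeas : Measurable p)
    (hp : Measure.map p P = volume.withDensity fun u => ENNReal.ofReal (normalPdf μ σ u))
    -- the trend constants and the transformed variable T:
    (τmean τsd : ℝ) (hτsd : 0 < τsd)
    (T : Ω → ℝ) (hT : ∀ ω, T ω = Fhatinv (Φ (τsd * p ω + τmean)))
    -- the claimed density and CDF:
    (fstar Fstar : ℝ → ℝ)
    (hfstar : ∀ t, fstar t = (1 / τsd)
      * normalPdf μ σ ((Φinv (Fhat t) - τmean) / τsd)
      * fhat t / normalPdf 0 1 (Φinv (Fhat t)))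
    (hFstar : ∀ t, Fstar t = (P {ω | T ω ≤ t}).toReal) :
    Measure.map T P = (volume.withDensity fun t => ENNReal.ofReal (fstar t)) ∧
      ∀ t : ℝ, Fstar t = Φ ((1 / σ) * ((Φinv (Fhat t) - τmean) / τsd - μ)) := by
  have hφi := integrable_normalPdf one_pos 0
  have hφpos := normalPdf_pos one_pos 0
  have hΦmem : ∀ x, Φ x ∈ Ioo 0 1 := cdf_mem_Ioo hΦ hφi hφpos (integral_normalPdf one_pos 0)
  set A : ℝ → ℝ := fun t => (Φinv (Fhat t) - τmean) / τsd
  set g : ℝ → ℝ := fun x => Fhatinv (Φ (τsd * x + τmean))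
  have hgA : LeftInverse g A := fun t => by
    simp only [g, A, mul_div_cancel₀ _ hτsd.ne', sub_add_cancel, hΦinvR _ (hFhatmem t), hFhatinvL]
  have hAg : LeftInverse A g := fun x => by
    simp only [g, A, hFhatinvR _ (hΦmem _), hΦinvL, add_sub_cancel_right]
    field_simp
  have hg : StrictMono g := fun x y hxy => hFhatmono.lt_iff_lt.1 <| by
    simp only [g, hFhatinvR _ (hΦmem _)]
    exact cdf_strictMono hΦ hφi hφpos (by gcongr)
  have hA : ∀ t, HasDerivAt A ((normalPdf 0 1 (Φinv (Fhat t)))⁻¹ * fhat t / τsd) t := fun t =>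
    (((hasDerivAt_cdf_inv hΦ (continuous_normalPdf 0 1) hφi hφpos hΦinvL
      (hΦinvR _ (hFhatmem t))).comp t (hFhatderiv t)).sub_const τmean).div_const τsd
  obtain ⟨hmap, hcdf⟩ := map_comp_eq_withDensity_and_measure_le_of_strictMono hpmeas hp hg hA
    (fun t => div_nonneg (mul_nonneg (inv_nonneg.2 (hφpos _).le) (hfhatpos t).le) hτsd.le) hgA hAg
  obtain rfl : T = g ∘ p := funext hT
  refine ⟨hmap.trans ?_, fun t => ?_⟩
  · congr with t
    simp only [hfstar, A]
    ring_nf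
  · rw [hFstar, hcdf, withDensity_normalPdf_Iic hΦ hσ, ENNReal.toReal_ofReal (hΦmem _).1.le]
    simp only [A]
    ring_nf

/-- **Predictive density and CDF in the HSDM model.**
Let `Φ` be the standard normal CDF (with inverse `Φinv` on `(0,1)`), `F̂` a strictly
increasing continuously differentiable bijection of `ℝ` onto `(0,1)` with positive
derivative `f̂` (and inverse `F̂inv`), let `p ~ N(μ, σ²)`, and define
`T := F̂⁻¹(Φ(τsd * p + τmean))`.  Then `T` has density
`f* t = (1/τsd) * φ_{μ,σ}((Φ⁻¹(F̂ t) - τmean)/τsd) * f̂ t / φ(Φ⁻¹(F̂ t))`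
and CDF `F* t = Φ((1/σ) * ((Φ⁻¹(F̂ t) - τmean)/τsd - μ))`. -/
theorem hsdm_predictive_density_and_cdf
    {Ω : Type*} [MeasurableSpace Ω] (P : Measure Ω) [IsProbabilityMeasure P]
    -- the standard normal CDF and its inverse:
    (Φ Φinv : ℝ → ℝ)
    (hΦ : ∀ x, Φ x = ∫ u in Set.Iic x, normalPdf 0 1 u)
    (hΦinvL : ∀ x, Φinv (Φ x) = x)
    (hΦinvR : ∀ y ∈ Set.Ioo (0 : ℝ) 1, Φ (Φinv y) = y)
    -- F̂ : ℝ → (0,1) strictly increasing, continuously differentiable bijection onto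
    -- (0,1), with everywhere positive derivative f̂, and its inverse F̂inv:
    (Fhat Fhatinv fhat : ℝ → ℝ)
    (hFhatmono : StrictMono Fhat)
    (hFhatmem : ∀ t, Fhat t ∈ Set.Ioo (0 : ℝ) 1)
    (hFhatderiv : ∀ t, HasDerivAt Fhat (fhat t) t)
    (hfhatcont : Continuous fhat)
    (hfhatpos : ∀ t, 0 < fhat t)
    (hFhatinvL : ∀ t, Fhatinv (Fhat t) = t)
    (hFhatinvR : ∀ y ∈ Set.Ioo (0 : ℝ) 1, Fhat (Fhatinv y) = y)
    -- p is normally distributed with mean μ and standard deviation σ: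
    (μ σ : ℝ) (hσ : 0 < σ)
    (p : Ω → ℝ) (hpmeas : Measurable p)
    (hp : Measure.map p P = volume.withDensity fun u => ENNReal.ofReal (normalPdf μ σ u))
    -- the trend constants and the transformed variable T:
    (τmean τsd : ℝ) (hτsd : 0 < τsd)
    (T : Ω → ℝ) (hT : ∀ ω, T ω = Fhatinv (Φ (τsd * p ω + τmean)))
    -- the claimed density and CDF:
    (fstar Fstar : ℝ → ℝ)
    (hfstar : ∀ t, fstar t = (1 / τsd)
      * normalPdf μ σ ((Φinv (Fhat t) - τmean) / τsd)
      * fhat t / normalPdf 0 1 (Φinv (Fhat t)))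
    (hFstar : ∀ t, Fstar t = (P {ω | T ω ≤ t}).toReal) :
    Measure.map T P = (volume.withDensity fun t => ENNReal.ofReal (fstar t)) ∧
      ∀ t : ℝ, Fstar t = Φ ((1 / σ) * ((Φinv (Fhat t) - τmean) / τsd - μ)) :=
  hsdm_predictive_density_and_cdf_general P Φ Φinv hΦ hΦinvL hΦinvR Fhat Fhatinv fhat hFhatmono
    hFhatmem hFhatderiv hfhatpos hFhatinvL hFhatinvR μ σ hσ p hpmeas hp τmean τsd hτsd T hT fstar
    Fstar hfstar hFstar
end
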